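/- Let N ≥ 8 be an integer divisible by 4 and let b_1 be a nonzero real number. Define b ∈ ℝ^{N/2} by b_r = b_1 sin²(π/N)/sin²(rπ/N) for 1 ≤ r ≤ N/2 − 1 and b_{N/2} = (b_1/2) sin²(π/N). Then ψ^{(i,j,k,l)}(b) = 0 for all (i,j,k,l) ∈ S_1 ∪ S_2; moreover, any b' ∈ ℝ^{N/2} whose first component equals b_1 and which satisfies ψ^{(i,j,k,l)}(b') = 0 for all (i,j,k,l) ∈ S_1 ∪ S_2 must equal b. -/

import Mathlib

/-- `c_α = cos(απ/N)` -/

noncomputable def cc (N : ℕ) (a : ℤ) : ℝ := Real.cos (a * Real.pi / N)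

/-- `s_α = sin(απ/N)` -/

noncomputable def ss (N : ℕ) (a : ℤ) : ℝ := Real.sin (a * Real.pi / N)

/-- `f_q^{(i,j,k,l)}` -/

noncomputable def ff (N : ℕ) (i j k l : ℤ) (q : ℕ) : ℝ :=
  if Odd q then cc N (i * q) * cc N (j * q) * cc N (k * q) * cc N (l * q)
  else ss N (i * q) * ss N (j * q) * ss N (k * q) * ss N (l * q)

/-- `ψ^{(i,j,k,l)}(b)` -/

noncomputable def psi (N : ℕ) (b : Fin (N / 2) → ℝ) (i j k l : ℤ) : ℝ :=
  -∑ q : Fin (N / 2), (-1 : ℝ) ^ ((q : ℕ) + 1) * b q * ff N i j k l ((q : ℕ) + 1)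

/-- `S₁ = {(0, n+1, N/2−n, N/2−1) : 1 ≤ n ≤ N/4−1}` -/
def S1set (N : ℕ) : Set (ℤ × ℤ × ℤ × ℤ) :=
  {x | ∃ n : ℤ, 1 ≤ n ∧ n ≤ (N : ℤ) / 4 - 1 ∧
    x = (0, n + 1, (N : ℤ) / 2 - n, (N : ℤ) / 2 - 1)}

/-- `S₂ = {(2−m, m, N/2−1, N/2−1) : m = 1 or 3 ≤ m ≤ N/4+1}` -/
def S2set (N : ℕ) : Set (ℤ × ℤ × ℤ × ℤ) :=
  {x | ∃ m : ℤ, (m = 1 ∨ (3 ≤ m ∧ m ≤ (N : ℤ) / 4 + 1)) ∧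
    x = (2 - m, m, (N : ℤ) / 2 - 1, (N : ℤ) / 2 - 1)}

/-- The explicit solution: `b_r = b₁ sin²(π/N)/sin²(rπ/N)` for `1 ≤ r ≤ N/2 − 1`
and `b_{N/2} = (b₁/2) sin²(π/N)`; the vector is 0-indexed (`b ⟨0,_⟩` is `b_1`). -/

noncomputable def bsol (N : ℕ) (b1 : ℝ) : Fin (N / 2) → ℝ := fun r =>
  if (r : ℕ) + 1 = N / 2 then b1 / 2 * Real.sin (Real.pi / N) ^ 2
  else b1 * Real.sin (Real.pi / N) ^ 2 / Real.sin (((r : ℕ) + 1) * Real.pi / N) ^ 2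

open Real Finset

/-! With `M = N / 2`, `θ_q = qπ/N` and `V_q = b_q sin² θ_q`, put `G(x) = ∑_q V_q cos (2xθ_q)`.
Each `ψ` indexed by `S₁ ∪ S₂` is a sum of differences `G(x) - G(y)` with `1 ≤ x, y < N`, and with
the reflection `G(N - x) = G(x)` the whole system says exactly that `G` is constant on `[1, M]`.
As a function of `x ∈ [0, M]`, `G` is the type-I discrete cosine transform of `V`, and inverting
it shows that `G` is constant on `[1, M]` iff `V` is proportional to the trapezoidal weights
`(1, …, 1, 1/2)`. The explicit solution is the member of this line with first entry `b₁`. -/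

theorem cos_odd_mul_pi_div_two_sub_mul (Q : ℕ) (hQ : Odd Q) (x y : ℝ) :
    cos (Q * π / 2 - x) * cos (Q * π / 2 - y) = sin x * sin y := by
  obtain ⟨r, rfl⟩ := hQ
  have h (z : ℝ) : cos (((2 * r + 1 : ℕ) : ℝ) * π / 2 - z) = (-1) ^ r * sin z := by
    rw [← cos_pi_div_two_sub, ← cos_add_nat_mul_pi]; push_cast; ring_nf
  rw [h, h, mul_mul_mul_comm, ← mul_pow]
  norm_num

theorem sin_even_mul_pi_div_two_sub_mul (Q : ℕ) (hQ : Even Q) (x y : ℝ) :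
    sin (Q * π / 2 - x) * sin (Q * π / 2 - y) = sin x * sin y := by
  obtain ⟨r, rfl⟩ := hQ
  have h (z : ℝ) : sin (((r + r : ℕ) : ℝ) * π / 2 - z) = -((-1) ^ r * sin z) := by
    rw [← sin_nat_mul_pi_sub]; push_cast; ring_nf
  rw [h, h, neg_mul_neg, mul_mul_mul_comm, ← mul_pow]
  norm_num

theorem sin_mul_sum_range_cos (θ φ : ℝ) (n : ℕ) :
    sin θ * ∑ j ∈ range n, cos (φ + 2 * (j + 1) * θ) = sin (n * θ) * cos (φ + (n + 1) * θ) := by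
  induction n with
  | zero => simp
  | succ n ih =>
    rw [sum_range_succ, mul_add, ih]
    have h1 := two_mul_sin_mul_cos θ (φ + 2 * (n + 1) * θ)
    have h2 := two_mul_sin_mul_cos (n * θ) (φ + (n + 1) * θ)
    have h3 := two_mul_sin_mul_cos ((n + 1) * θ) (φ + (n + 1 + 1) * θ)
    rw [show θ - (φ + 2 * (n + 1) * θ) = -(φ + (2 * n + 1) * θ) by ring,
      show θ + (φ + 2 * (n + 1) * θ) = φ + (2 * n + 3) * θ by ring, sin_neg] at h1
    rw [show n * θ - (φ + (n + 1) * θ) = -(φ + θ) by ring,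
      show n * θ + (φ + (n + 1) * θ) = φ + (2 * n + 1) * θ by ring] at h2
    rw [show (n + 1) * θ - (φ + (n + 1 + 1) * θ) = -(φ + θ) by ring,
      show (n + 1) * θ + (φ + (n + 1 + 1) * θ) = φ + (2 * n + 3) * θ by ring] at h3
    push_cast
    linear_combination (h1 + h2 - h3) / 2

noncomputable def trapezoidWeight (M p : ℕ) : ℝ := if p = 0 ∨ p = M then 1 / 2 else 1

theorem sum_range_succ_trapezoidWeight_mul {M : ℕ} (hM : 0 < M) (g : ℕ → ℝ) :
    ∑ p ∈ range (M + 1), trapezoidWeight M p * g p = ∑ p ∈ range M, (g p + g (p + 1)) / 2 := by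
  obtain ⟨M, rfl⟩ : ∃ M', M = M' + 1 := ⟨M - 1, by omega⟩
  have hmid : ∀ p ∈ range M, trapezoidWeight (M + 1) (p + 1) * g (p + 1) = g (p + 1) := by
    intro p hp
    rw [trapezoidWeight, if_neg (by have := mem_range.mp hp; omega), one_mul]
  rw [sum_range_succ, sum_range_succ', sum_congr rfl hmid, ← sum_div, sum_add_distrib,
    sum_range_succ', sum_range_succ (fun p => g (p + 1))]
  simp only [trapezoidWeight, Nat.right_eq_add, Nat.add_eq_zero_iff, one_ne_zero, and_false,
    or_false, ↓reduceIte, one_div, or_true]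
  ring

theorem sin_half_mul_sum_range_cos_add_cos (θ : ℝ) (M : ℕ) :
    sin (θ / 2) * ∑ p ∈ range M, (cos (p * θ) + cos ((p + 1) * θ)) / 2 =
      cos (θ / 2) * sin (M * θ) / 2 := by
  have hterm (p : ℕ) : sin (θ / 2) * ((cos (p * θ) + cos ((p + 1) * θ)) / 2) =
      cos (θ / 2) / 2 * (sin ((p + 1 : ℕ) * θ) - sin (p * θ)) := by
    rw [cos_add_cos, sin_sub_sin, ← cos_neg ((p * θ - (p + 1) * θ) / 2)]
    push_cast
    ring_nf
  rw [mul_sum, sum_congr rfl (fun p _ => hterm p), ← mul_sum,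
    sum_range_sub (fun p => sin (p * θ))]
  simp only [CharP.cast_eq_zero, zero_mul, sin_zero, sub_zero]
  ring

theorem sum_trapezoidWeight_mul_cos {M : ℕ} (hM : 0 < M) (a : ℤ) :
    ∑ p ∈ range (M + 1), trapezoidWeight M p * cos (a * p * π / M) =
      if 2 * (M : ℤ) ∣ a then M else 0 := by
  have hM' : (M : ℝ) ≠ 0 := by positivity
  split_ifs with h
  · obtain ⟨k, rfl⟩ := h
    have hcos (p : ℕ) : cos (((2 * M * k : ℤ) : ℝ) * p * π / M) = 1 := by
      rw [← cos_int_mul_two_pi (k * p)]; push_cast; field_simp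
    have := sum_range_succ_trapezoidWeight_mul hM (fun _ => 1)
    simp only [hcos, this]
    norm_num
  · have hθ (p : ℕ) : (a : ℝ) * p * π / M = p * (a * π / M) := by ring
    simp only [hθ]
    rw [sum_range_succ_trapezoidWeight_mul hM]
    have hsin : sin (a * π / M / 2) ≠ 0 := by
      rw [Ne, sin_eq_zero_iff]
      rintro ⟨k, hk⟩
      refine h ⟨k, ?_⟩
      have : (a : ℝ) = 2 * M * k := by
        field_simp at hk
        linarith
      exact_mod_cast this
    have hMθ : sin (M * (a * π / M)) = 0 := by
      rw [mul_div_cancel₀ _ hM']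
      exact sin_int_mul_pi a
    have := sin_half_mul_sum_range_cos_add_cos (a * π / M) M
    rw [hMθ, mul_zero, zero_div] at this
    push_cast
    exact (mul_eq_zero.mp this).resolve_left hsin

theorem trapezoidWeight_mul_sum_cos_mul_cos {M q r : ℕ} (hM : 0 < M) (hq : q ≤ M) (hr : r ≤ M) :
    trapezoidWeight M q * ∑ x ∈ range (M + 1),
        trapezoidWeight M x * (cos (q * x * π / M) * cos (r * x * π / M)) =
      if q = r then (M : ℝ) / 2 else 0 := by
  have hterm (x : ℕ) : trapezoidWeight M x * (cos (q * x * π / M) * cos (r * x * π / M)) =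
      (trapezoidWeight M x * cos (((q - r : ℤ) : ℝ) * x * π / M) +
        trapezoidWeight M x * cos (((q + r : ℤ) : ℝ) * x * π / M)) / 2 := by
    push_cast
    rw [show ((q : ℝ) - r) * x * π / M = q * x * π / M - r * x * π / M by ring,
      show ((q : ℝ) + r) * x * π / M = q * x * π / M + r * x * π / M by ring, cos_sub, cos_add]
    ring
  have hsub : 2 * (M : ℤ) ∣ q - r ↔ q = r := by
    refine ⟨fun h => ?_, fun h => by simp [h]⟩
    have := Int.eq_zero_of_abs_lt_dvd h (by rw [abs_lt]; omega)
    omega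
  have hadd : 2 * (M : ℤ) ∣ q + r ↔ q = r ∧ (q = 0 ∨ q = M) := by
    refine ⟨fun h => ?_, ?_⟩
    · by_cases hqr : q + r = 2 * M
      · omega
      · have := Int.eq_zero_of_abs_lt_dvd h (by rw [abs_lt]; omega)
        omega
    · rintro ⟨rfl, rfl | rfl⟩
      · simp
      · exact ⟨1, by ring⟩
  rw [sum_congr rfl (fun x _ => hterm x), ← sum_div, sum_add_distrib,
    sum_trapezoidWeight_mul_cos hM, sum_trapezoidWeight_mul_cos hM]
  simp only [hsub, hadd, trapezoidWeight]
  split_ifs <;> first | (exfalso; tauto) | ring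

noncomputable def cosSum (M : ℕ) (c : ℕ → ℝ) (x : ℤ) : ℝ :=
  ∑ q ∈ range (M + 1), c q * cos (q * x * π / M)

theorem trapezoidWeight_mul_sum_cosSum_mul_cos {M r : ℕ} (hM : 0 < M) (hr : r ≤ M) (c : ℕ → ℝ) :
    trapezoidWeight M r * ∑ x ∈ range (M + 1),
        trapezoidWeight M x * (cosSum M c x * cos (r * x * π / M)) = M / 2 * c r := by
  calc trapezoidWeight M r * ∑ x ∈ range (M + 1),
        trapezoidWeight M x * (cosSum M c x * cos (r * x * π / M))
      = ∑ q ∈ range (M + 1), c q * (trapezoidWeight M r * ∑ x ∈ range (M + 1),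
          trapezoidWeight M x * (cos (r * x * π / M) * cos (q * x * π / M))) := by
        simp only [cosSum, Int.cast_natCast, sum_mul, mul_sum]
        rw [sum_comm]
        refine sum_congr rfl fun q _ => sum_congr rfl fun x _ => by ring
    _ = ∑ q ∈ range (M + 1), c q * if r = q then (M : ℝ) / 2 else 0 := by
        refine sum_congr rfl fun q hq => ?_
        rw [trapezoidWeight_mul_sum_cos_mul_cos hM hr (by simpa [Nat.lt_succ_iff] using hq)]
    _ = M / 2 * c r := by
        simp [mul_comm, Nat.lt_succ_iff.mpr hr]

theorem cosSum_eq_of_eq_mul_trapezoidWeight {M : ℕ} (hM : 0 < M) {c : ℕ → ℝ} {κ : ℝ}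
    (hc : ∀ q, 1 ≤ q → q ≤ M → c q = κ * trapezoidWeight M q) {x : ℤ} (hx : ¬ 2 * (M : ℤ) ∣ x) :
    cosSum M c x = c 0 - κ / 2 := by
  have hW := sum_trapezoidWeight_mul_cos hM x
  rw [if_neg hx, sum_range_succ'] at hW
  rw [cosSum, sum_range_succ']
  have hshift : ∀ q ∈ range M, c (q + 1) * cos ((q + 1 : ℕ) * x * π / M) =
      κ * (trapezoidWeight M (q + 1) * cos (x * (q + 1 : ℕ) * π / M)) := by
    intro q hq
    rw [hc (q + 1) (by omega) (by have := mem_range.mp hq; omega)]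
    ring_nf
  rw [sum_congr rfl hshift, ← mul_sum]
  simp only [trapezoidWeight, Nat.add_eq_zero_iff, one_ne_zero, and_false, false_or, one_div,
    Nat.cast_add, Nat.cast_one, ite_mul, one_mul, true_or, ↓reduceIte, CharP.cast_eq_zero, mul_zero,
    zero_mul, zero_div, cos_zero, mul_one] at hW ⊢
  linear_combination κ * hW

theorem sum_trapezoidWeight_mul_cosSum_mul_cos_of_const {M r : ℕ} (hM : 0 < M)
    (hr : ¬ 2 * (M : ℤ) ∣ r) {c : ℕ → ℝ}
    (h : ∀ x : ℤ, 1 ≤ x → x ≤ M → cosSum M c x = cosSum M c 1) :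
    ∑ x ∈ range (M + 1), trapezoidWeight M x * (cosSum M c x * cos (r * x * π / M)) =
      (cosSum M c 0 - cosSum M c 1) / 2 := by
  have hW := sum_trapezoidWeight_mul_cos hM r
  rw [if_neg hr, sum_range_succ'] at hW
  rw [sum_range_succ']
  have hconst : ∀ x ∈ range M, trapezoidWeight M (x + 1) *
      (cosSum M c (x + 1 : ℕ) * cos (r * (x + 1 : ℕ) * π / M)) =
      cosSum M c 1 * (trapezoidWeight M (x + 1) * cos ((r : ℤ) * (x + 1 : ℕ) * π / M)) := by
    intro x hx
    rw [h _ (by omega) (by have := mem_range.mp hx; omega)]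
    push_cast
    ring
  rw [sum_congr rfl hconst, ← mul_sum]
  simp only [trapezoidWeight, Nat.add_eq_zero_iff, one_ne_zero, and_false, false_or, one_div,
    Int.cast_natCast, Nat.cast_add, Nat.cast_one, ite_mul, one_mul, true_or, ↓reduceIte,
    CharP.cast_eq_zero, mul_zero, zero_mul, zero_div, cos_zero, mul_one] at hW ⊢
  linear_combination cosSum M c 1 * hW

theorem cosSum_eq_cosSum_one_iff {M : ℕ} (hM : 0 < M) (c : ℕ → ℝ) :
    (∀ x : ℤ, 1 ≤ x → x ≤ M → cosSum M c x = cosSum M c 1) ↔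
      ∃ κ, ∀ q, 1 ≤ q → q ≤ M → c q = κ * trapezoidWeight M q := by
  have hnd (y : ℤ) (hy1 : 1 ≤ y) (hyM : y ≤ M) : ¬ 2 * (M : ℤ) ∣ y := fun h =>
    absurd (Int.le_of_dvd (by omega) h) (by omega)
  constructor
  · intro h
    refine ⟨(cosSum M c 0 - cosSum M c 1) / M, fun r hr1 hrM => ?_⟩
    have hinv := trapezoidWeight_mul_sum_cosSum_mul_cos hM hrM c
    rw [sum_trapezoidWeight_mul_cosSum_mul_cos_of_const hM (hnd r (by omega) (by omega)) h]
      at hinv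
    have : (M : ℝ) ≠ 0 := by positivity
    field_simp
    linear_combination -2 * hinv
  · rintro ⟨κ, hκ⟩ x hx1 hxM
    rw [cosSum_eq_of_eq_mul_trapezoidWeight hM hκ (hnd x hx1 hxM),
      cosSum_eq_of_eq_mul_trapezoidWeight hM hκ (hnd 1 le_rfl (by exact_mod_cast hM))]

theorem neg_neg_one_pow_mul_ff_half_sub (N : ℕ) (hN : Even N) (hN0 : N ≠ 0) (i j k l : ℤ)
    (Q : ℕ) :
    -((-1) ^ Q * ff N i j ((N : ℤ) / 2 - k) ((N : ℤ) / 2 - l) Q) =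
      sin (k * (Q * π / N)) * sin (l * (Q * π / N)) *
        (cos ((i + j) * (Q * π / N)) - cos (Q * π + (j - i) * (Q * π / N))) / 2 := by
  set θ := Q * π / N
  have harg (a : ℤ) : ((a * Q : ℤ) : ℝ) * π / N = a * θ := by push_cast; ring
  have hshift (a : ℤ) : ((((N : ℤ) / 2 - a) * Q : ℤ) : ℝ) * π / N = Q * π / 2 - a * θ := by
    obtain ⟨M, rfl⟩ := hN
    have hM : ((M + M : ℕ) : ℤ) / 2 = M := by omega
    have : (M : ℝ) ≠ 0 := by norm_cast; omega
    rw [hM, ← harg]; push_cast; field_simp; ring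
  have hcos : cos (Q * π + (j - i) * θ) = (-1) ^ Q * cos ((j - i) * θ) := by
    rw [add_comm, cos_add_nat_mul_pi]
  rw [hcos, show (i + j) * θ = i * θ + j * θ by ring, show (j - i) * θ = j * θ - i * θ by ring,
    cos_add, cos_sub]
  rcases Nat.even_or_odd Q with hQ | hQ
  · have := sin_even_mul_pi_div_two_sub_mul Q hQ (k * θ) (l * θ)
    simp only [ff, ss, if_neg (Nat.not_odd_iff_even.mpr hQ), hQ.neg_one_pow]
    rw [hshift, hshift, harg, harg]
    linear_combination (-(sin (i * θ) * sin (j * θ))) * this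
  · have := cos_odd_mul_pi_div_two_sub_mul Q hQ (k * θ) (l * θ)
    simp only [ff, cc, if_pos hQ, hQ.neg_one_pow]
    rw [hshift, hshift, harg, harg]
    linear_combination (cos (i * θ) * cos (j * θ)) * this

noncomputable def cosProfile (N : ℕ) (b : Fin (N / 2) → ℝ) (x : ℤ) : ℝ :=
  ∑ q : Fin (N / 2), b q * sin (((q : ℕ) + 1 : ℕ) * π / N) ^ 2 *
    cos (2 * x * (((q : ℕ) + 1 : ℕ) * π / N))

theorem psi_eq_sum (N : ℕ) (b : Fin (N / 2) → ℝ) (i j k l : ℤ) :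
    psi N b i j k l =
      ∑ q : Fin (N / 2), b q * -((-1) ^ ((q : ℕ) + 1) * ff N i j k l ((q : ℕ) + 1)) := by
  rw [psi, ← sum_neg_distrib]
  exact sum_congr rfl fun q _ => by ring

theorem nat_mul_pi_eq_int_div_two_mul {N : ℕ} (hN : Even N) (hN0 : N ≠ 0) (Q : ℕ) :
    (Q : ℝ) * π = 2 * (((N : ℤ) / 2 : ℤ) : ℝ) * (Q * π / N) := by
  obtain ⟨M, rfl⟩ := hN
  rw [show ((M + M : ℕ) : ℤ) / 2 = M by omega]
  have : (M : ℝ) ≠ 0 := by norm_cast; omega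
  push_cast
  field_simp
  ring

theorem psi_S2_eq {N : ℕ} (hN : Even N) (hN0 : N ≠ 0) (b : Fin (N / 2) → ℝ) (m : ℤ) :
    psi N b (2 - m) m ((N : ℤ) / 2 - 1) ((N : ℤ) / 2 - 1) =
      (cosProfile N b 1 - cosProfile N b ((N : ℤ) / 2 + m - 1)) / 2 := by
  rw [psi_eq_sum, cosProfile, cosProfile, ← sum_sub_distrib, sum_div]
  refine sum_congr rfl fun q _ => ?_
  rw [neg_neg_one_pow_mul_ff_half_sub N hN hN0]
  set θ := (((q : ℕ) + 1 : ℕ) : ℝ) * π / N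
  have hQ : (((q : ℕ) + 1 : ℕ) : ℝ) * π = 2 * (((N : ℤ) / 2 : ℤ) : ℝ) * θ :=
    nat_mul_pi_eq_int_div_two_mul hN hN0 _
  rw [hQ]
  push_cast
  ring_nf

theorem psi_S1_eq {N : ℕ} (hN : Even N) (hN0 : N ≠ 0) (b : Fin (N / 2) → ℝ) (n : ℕ) :
    psi N b 0 (n + 1) ((N : ℤ) / 2 - n) ((N : ℤ) / 2 - 1) =
      ∑ j ∈ range n, (cosProfile N b (j + 1) - cosProfile N b ((N : ℤ) / 2 + j + 1)) / 2 := by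
  simp only [psi_eq_sum, cosProfile, ← sum_sub_distrib, sum_div]
  rw [sum_comm]
  refine sum_congr rfl fun q _ => ?_
  rw [neg_neg_one_pow_mul_ff_half_sub N hN hN0]
  set θ := (((q : ℕ) + 1 : ℕ) : ℝ) * π / N
  have hQ : (((q : ℕ) + 1 : ℕ) : ℝ) * π = 2 * (((N : ℤ) / 2 : ℤ) : ℝ) * θ :=
    nat_mul_pi_eq_int_div_two_mul hN hN0 _
  have hj : ∀ j ∈ range n,
      (b q * sin θ ^ 2 * cos (2 * ((j : ℤ) + 1 : ℤ) * θ) -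
        b q * sin θ ^ 2 * cos (2 * ((N : ℤ) / 2 + j + 1 : ℤ) * θ)) / 2 =
      b q * sin θ / 2 * (sin θ * (cos (0 + 2 * (j + 1) * θ) -
        cos (2 * (((N : ℤ) / 2 : ℤ) : ℝ) * θ + 2 * (j + 1) * θ))) := by
    intro j _
    push_cast
    ring_nf
  rw [sum_congr rfl hj, ← mul_sum, ← mul_sum, sum_sub_distrib, mul_sub (sin θ),
    sin_mul_sum_range_cos, sin_mul_sum_range_cos, hQ]
  push_cast
  ring_nf

theorem cosProfile_natCast_sub {N : ℕ} (hN0 : N ≠ 0) (b : Fin (N / 2) → ℝ) (x : ℤ) :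
    cosProfile N b (N - x) = cosProfile N b x := by
  have hN' : (N : ℝ) ≠ 0 := by exact_mod_cast hN0
  refine sum_congr rfl fun q _ => ?_
  rw [← cos_nat_mul_two_pi_sub _ ((q : ℕ) + 1)]
  congr 2
  push_cast
  field_simp
  ring

theorem cosProfile_eq_cosProfile_one_of_forall_psi_eq_zero {N : ℕ} (hN4 : 4 ∣ N) (hN0 : 0 < N)
    (b : Fin (N / 2) → ℝ) (h : ∀ x ∈ S1set N ∪ S2set N, psi N b x.1 x.2.1 x.2.2.1 x.2.2.2 = 0) :
    ∀ x : ℤ, 1 ≤ x → x ≤ (N / 2 : ℕ) → cosProfile N b x = cosProfile N b 1 := by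
  have hN : Even N := even_iff_two_dvd.mpr (dvd_trans ⟨2, rfl⟩ hN4)
  obtain ⟨K, hK⟩ := hN4
  have h2 : (N : ℤ) / 2 = 2 * K := by omega
  have hS1 (n : ℕ) (hn : n ≤ K - 1) :
      ∑ j ∈ range n, (cosProfile N b (j + 1) - cosProfile N b (2 * K + j + 1)) / 2 = 0 := by
    rcases Nat.eq_zero_or_pos n with rfl | hn0
    · simp
    have := h _ (Or.inl ⟨n, by omega, by omega, rfl⟩)
    rwa [psi_S1_eq hN hN0.ne', h2] at this
  have hS2 (m : ℤ) (hm : m = 1 ∨ 3 ≤ m ∧ m ≤ K + 1) :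
      cosProfile N b 1 = cosProfile N b (2 * K + m - 1) := by
    have := h _ (Or.inr ⟨m, by omega, rfl⟩)
    rw [psi_S2_eq hN hN0.ne', h2] at this
    linarith
  have hpair (n : ℕ) (hn1 : 1 ≤ n) (hnK : n ≤ K - 1) :
      cosProfile N b n = cosProfile N b (2 * K + n) := by
    obtain ⟨n, rfl⟩ : ∃ n', n = n' + 1 := ⟨n - 1, by omega⟩
    have := hS1 (n + 1) hnK
    rw [sum_range_succ, hS1 n (by omega), zero_add] at this
    push_cast at this ⊢
    rw [← add_assoc]
    linarith
  have hsym := cosProfile_natCast_sub hN0.ne' b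
  -- `S₁` gives `G n = G (2K + n)` for `1 ≤ n < K` and `S₂` gives `G 1 = G (2K + y)` for `y = 0` and
  -- `2 ≤ y ≤ K`; the reflection `G (4K - x) = G x` covers the rest of `[1, 2K]`.
  intro x hx1 hxM
  rcases (by omega : x = 1 ∨ (2 ≤ x ∧ x ≤ K - 1) ∨ (K ≤ x ∧ 2 ≤ x ∧ x ≤ 2 * K - 2) ∨
      (x = 2 * K - 1 ∧ 2 ≤ K) ∨ x = 2 * K) with
    rfl | ⟨hx2, hxK⟩ | ⟨hKx, hx2, hxK⟩ | ⟨rfl, hK2⟩ | rfl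
  · rfl
  · lift x to ℕ using (by omega)
    rw [hpair x (by omega) (by omega), hS2 (x + 1) (by omega)]
    ring_nf
  · rw [← hsym, hS2 (2 * K - x + 1) (by omega)]
    congr 1
    omega
  · have := hpair 1 le_rfl (by omega)
    push_cast at this
    rw [← hsym, this]
    congr 1
    omega
  · rw [hS2 1 (by omega)]
    ring_nf

theorem forall_psi_eq_zero_of_cosProfile_eq {N : ℕ} (hN : Even N) (hN0 : 0 < N)
    (b : Fin (N / 2) → ℝ) (h : ∀ x : ℤ, 1 ≤ x → x < N → cosProfile N b x = cosProfile N b 1) :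
    ∀ x ∈ S1set N ∪ S2set N, psi N b x.1 x.2.1 x.2.2.1 x.2.2.2 = 0 := by
  obtain ⟨M, hM⟩ := hN
  rintro x (⟨n, hn1, hnN, rfl⟩ | ⟨m, hm, rfl⟩)
  · lift n to ℕ using (by omega)
    rw [psi_S1_eq ⟨M, hM⟩ hN0.ne']
    refine sum_eq_zero fun j hj => ?_
    simp only [mem_range] at hj
    rw [h (j + 1) (by omega) (by omega), h ((N : ℤ) / 2 + j + 1) (by omega) (by omega), sub_self,
      zero_div]
  · rw [psi_S2_eq ⟨M, hM⟩ hN0.ne', h ((N : ℤ) / 2 + m - 1) (by omega) (by omega), sub_self,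
      zero_div]

theorem forall_psi_eq_zero_iff_cosProfile {N : ℕ} (hN4 : 4 ∣ N) (hN0 : 0 < N)
    (b : Fin (N / 2) → ℝ) :
    (∀ x ∈ S1set N ∪ S2set N, psi N b x.1 x.2.1 x.2.2.1 x.2.2.2 = 0) ↔
      ∀ x : ℤ, 1 ≤ x → x ≤ (N / 2 : ℕ) → cosProfile N b x = cosProfile N b 1 := by
  have hN : Even N := even_iff_two_dvd.mpr (dvd_trans ⟨2, rfl⟩ hN4)
  refine ⟨cosProfile_eq_cosProfile_one_of_forall_psi_eq_zero hN4 hN0 b, fun h => ?_⟩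
  refine forall_psi_eq_zero_of_cosProfile_eq hN hN0 b fun x hx1 hxN => ?_
  by_cases hx : x ≤ (N / 2 : ℕ)
  · exact h x hx1 hx
  · rw [← cosProfile_natCast_sub hN0.ne', h _ (by omega) (by omega)]

noncomputable def cosCoeff (N : ℕ) (b : Fin (N / 2) → ℝ) (Q : ℕ) : ℝ :=
  if h : 0 < Q ∧ Q ≤ N / 2 then b ⟨Q - 1, by omega⟩ * sin (Q * π / N) ^ 2 else 0

theorem cosProfile_eq_cosSum {N : ℕ} (hN : Even N) (b : Fin (N / 2) → ℝ) (x : ℤ) :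
    cosProfile N b x = cosSum (N / 2) (cosCoeff N b) x := by
  have hM : ((N / 2 : ℕ) : ℝ) = N / 2 := Nat.cast_div_charZero (even_iff_two_dvd.mp hN)
  rw [cosSum, sum_range_succ', cosCoeff, dif_neg (by omega), zero_mul, add_zero, sum_range]
  refine sum_congr rfl fun q _ => ?_
  rw [cosCoeff, dif_pos (by omega), hM]
  simp only [add_tsub_cancel_right, Fin.eta]
  congr 2
  ring

theorem forall_psi_eq_zero_iff {N : ℕ} (hN4 : 4 ∣ N) (hN0 : 0 < N) (b : Fin (N / 2) → ℝ) :
    (∀ x ∈ S1set N ∪ S2set N, psi N b x.1 x.2.1 x.2.2.1 x.2.2.2 = 0) ↔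
      ∃ κ, ∀ q : Fin (N / 2),
        b q * sin (((q : ℕ) + 1 : ℕ) * π / N) ^ 2 = κ * trapezoidWeight (N / 2) ((q : ℕ) + 1) := by
  have hN : Even N := even_iff_two_dvd.mpr (dvd_trans ⟨2, rfl⟩ hN4)
  simp only [forall_psi_eq_zero_iff_cosProfile hN4 hN0, cosProfile_eq_cosSum hN]
  rw [cosSum_eq_cosSum_one_iff (by omega)]
  refine exists_congr fun κ => ⟨fun h q => ?_, fun h Q hQ1 hQM => ?_⟩
  · rw [← h _ (by omega) q.2, cosCoeff, dif_pos (by omega)]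
    simp
  · obtain ⟨q, rfl⟩ : ∃ q, Q = q + 1 := ⟨Q - 1, by omega⟩
    rw [← h ⟨q, by omega⟩, cosCoeff, dif_pos (by omega)]
    simp

theorem sin_nat_mul_pi_div_pos {N Q : ℕ} (hQ0 : 0 < Q) (hQ : Q ≤ N / 2) : 0 < sin (Q * π / N) := by
  have hN : (0 : ℝ) < N := by norm_cast; omega
  apply sin_pos_of_pos_of_lt_pi (by positivity)
  rw [div_lt_iff₀ hN]
  have : (Q : ℝ) < N := by norm_cast; omega
  nlinarith [pi_pos]

theorem bsol_mul_sin_sq {N : ℕ} (hN : Even N) (b1 : ℝ) (q : Fin (N / 2)) :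
    bsol N b1 q * sin (((q : ℕ) + 1 : ℕ) * π / N) ^ 2 =
      b1 * sin (π / N) ^ 2 * trapezoidWeight (N / 2) ((q : ℕ) + 1) := by
  rw [bsol, trapezoidWeight]
  by_cases hq : (q : ℕ) + 1 = N / 2
  · have hM : ((N / 2 : ℕ) : ℝ) = N / 2 := Nat.cast_div_charZero (even_iff_two_dvd.mp hN)
    have hN0 : (N : ℝ) ≠ 0 := by norm_cast; omega
    have : (((q : ℕ) + 1 : ℕ) : ℝ) * π / N = π / 2 := by
      rw [hq, hM]; field_simp
    rw [this, sin_pi_div_two, if_pos hq, if_pos (Or.inr hq)]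
    ring
  · have hsin := (sin_nat_mul_pi_div_pos (N := N) (Q := (q : ℕ) + 1) (by omega) (by omega)).ne'
    rw [if_neg hq, if_neg (show ¬((q : ℕ) + 1 = 0 ∨ (q : ℕ) + 1 = N / 2) by omega), mul_one]
    push_cast at hsin ⊢
    exact div_mul_cancel₀ _ (pow_ne_zero 2 hsin)

theorem psi_explicit_solution_unique (N : ℕ) (hN4 : 4 ∣ N) (hN8 : 8 ≤ N)
    (b1 : ℝ) :
    (∀ x ∈ S1set N ∪ S2set N, psi N (bsol N b1) x.1 x.2.1 x.2.2.1 x.2.2.2 = 0) ∧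
    ∀ b' : Fin (N / 2) → ℝ, b' ⟨0, by omega⟩ = b1 →
      (∀ x ∈ S1set N ∪ S2set N, psi N b' x.1 x.2.1 x.2.2.1 x.2.2.2 = 0) →
      b' = bsol N b1 := by
  have hsol := bsol_mul_sin_sq (even_iff_two_dvd.mpr (dvd_trans ⟨2, rfl⟩ hN4)) b1
  refine ⟨(forall_psi_eq_zero_iff hN4 (by omega) _).mpr ⟨_, hsol⟩, fun b' hb'1 hb' => ?_⟩
  obtain ⟨κ, hκ⟩ := (forall_psi_eq_zero_iff hN4 (by omega) b').mp hb'
  have hκ1 : κ = b1 * sin (π / N) ^ 2 := by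
    have := hκ ⟨0, by omega⟩
    have h1 : 1 ≠ N / 2 := by omega
    simpa [hb'1, trapezoidWeight, h1] using this.symm
  funext q
  have hsin := (sin_nat_mul_pi_div_pos (N := N) (Q := (q : ℕ) + 1) (by omega) (by omega)).ne'
  apply mul_right_cancel₀ (pow_ne_zero 2 hsin)
  rw [hκ q, hsol q, hκ1]
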